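/- Let ℓ : ℝ → ℝ be a C¹ function, α ∈ ℝ, d ≥ 1, n ≥ 0, and fix an index i with 2 ≤ i ≤ d+1. On ℝ^{2(d+1)+n} with coordinates (x₁, …, x_{d+1}, y₁, …, y_{d+1}, z₁, …, z_n), consider the ODE system: ẋ₁ = 1; ẏ₁ = −α ℓ′(2x₁ − 1)(x_i² + y_i²); ẋ_i = α ℓ(2x₁ − 1) y_i; ẏ_i = −α ℓ(2x₁ − 1) x_i; and all remaining coordinates constant. Then for every initial condition p = (x, y, z) the unique solution γ(t) with γ(0) = p is given explicitly by: x₁(t) = x₁ + t; x_i(t)² + y_i(t)² = x_i² + y_i² for all t; (x_i(t), y_i(t)) = R_{−θ(t)}(x_i, y_i), where θ(t) = α ∫₀^t ℓ(2x₁ + 2s − 1) ds; y₁(t) = y₁ − (α/2)[ℓ(2x₁ + 2t − 1) − ℓ(2x₁ − 1)](x_i² + y_i²); and all other coordinates equal to those of p. -/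

import Mathlib

/-!
Existence is a direct computation. Uniqueness cannot come from a Lipschitz estimate, since `ℓ′` is
only continuous, but the system is triangular: `x₁(t) = x₁ + t` is forced; then `(x_i, y_i)` solves
a linear system `ẋ = ω y`, `ẏ = -ω x` with a known angular speed `ω(t)`, along which the squared
distance between two solutions is conserved; finally `y₁` and the remaining coordinates have
derivatives determined by what is already known.
-/

open Real

/-- The vector field on `ℝ^{2(d+1)+n} = ℝ^{d+1} × ℝ^{d+1} × ℝ^n` given by:
`ẋ₁ = 1`; `ẏ₁ = -α ℓ′(2x₁-1)(x_i² + y_i²)`; `ẋ_i = α ℓ(2x₁-1) y_i`;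
`ẏ_i = -α ℓ(2x₁-1) x_i`; all remaining coordinates constant.
(The coordinate `x₁` corresponds to the index `0` of `Fin (d+1)`.) -/
noncomputable def vf19 {d n : ℕ} (ℓ : ℝ → ℝ) (α : ℝ) (i : Fin (d + 1))
    (p : (Fin (d + 1) → ℝ) × (Fin (d + 1) → ℝ) × (Fin n → ℝ)) :
    (Fin (d + 1) → ℝ) × (Fin (d + 1) → ℝ) × (Fin n → ℝ) :=
  (fun j => if j = 0 then 1 else if j = i then α * ℓ (2 * p.1 0 - 1) * p.2.1 i else 0,
   fun j =>
     if j = 0 then -(α * deriv ℓ (2 * p.1 0 - 1) * (p.1 i ^ 2 + p.2.1 i ^ 2))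
     else if j = i then -(α * ℓ (2 * p.1 0 - 1) * p.1 i) else 0,
   0)

section Calculus

variable {𝕜 : Type*} [NontriviallyNormedField 𝕜] {E F : Type*} [NormedAddCommGroup E]
  [NormedSpace 𝕜 E] [NormedAddCommGroup F] [NormedSpace 𝕜 F]

theorem hasDerivAt_prod_iff {f : 𝕜 → E × F} {f' : E × F} {t : 𝕜} :
    HasDerivAt f f' t ↔
      HasDerivAt (fun s => (f s).1) f'.1 t ∧ HasDerivAt (fun s => (f s).2) f'.2 t :=
  ⟨fun h => ⟨(ContinuousLinearMap.fst 𝕜 E F).hasFDerivAt.comp_hasDerivAt t h,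
      (ContinuousLinearMap.snd 𝕜 E F).hasFDerivAt.comp_hasDerivAt t h⟩,
    fun h => h.1.prodMk h.2⟩

theorem hasDerivAt_prod_pi_iff {ι κ μ : Type*} [Fintype ι] [Fintype κ] [Fintype μ]
    {f : 𝕜 → (ι → 𝕜) × (κ → 𝕜) × (μ → 𝕜)} {f' : (ι → 𝕜) × (κ → 𝕜) × (μ → 𝕜)} {t : 𝕜} :
    HasDerivAt f f' t ↔
      (∀ j, HasDerivAt (fun s => (f s).1 j) (f'.1 j) t) ∧
      (∀ j, HasDerivAt (fun s => (f s).2.1 j) (f'.2.1 j) t) ∧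
      ∀ k, HasDerivAt (fun s => (f s).2.2 k) (f'.2.2 k) t := by
  simp only [hasDerivAt_prod_iff, hasDerivAt_pi]

theorem eq_of_forall_hasDerivAt [IsRCLikeNormedField 𝕜] {f g f' : 𝕜 → E}
    (hf : ∀ t, HasDerivAt f (f' t) t) (hg : ∀ t, HasDerivAt g (f' t) t) (t₀ : 𝕜)
    (h : f t₀ = g t₀) : f = g :=
  eq_of_fderiv_eq (fun t => (hf t).differentiableAt) (fun t => (hg t).differentiableAt)
    (fun t => by rw [(hf t).hasFDerivAt.fderiv, (hg t).hasFDerivAt.fderiv]) t₀ h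

end Calculus

section Rotation

theorem rotation_sq_add_sq (a b θ : ℝ) :
    (a * cos θ + b * sin θ) ^ 2 + (-(a * sin θ) + b * cos θ) ^ 2 = a ^ 2 + b ^ 2 := by
  linear_combination (a ^ 2 + b ^ 2) * sin_sq_add_cos_sq θ

theorem hasDerivAt_rotation {θ : ℝ → ℝ} {ω t : ℝ} (a b : ℝ) (hθ : HasDerivAt θ ω t) :
    HasDerivAt (fun s => a * cos (θ s) + b * sin (θ s))
        (ω * (-(a * sin (θ t)) + b * cos (θ t))) t ∧
      HasDerivAt (fun s => -(a * sin (θ s)) + b * cos (θ s))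
        (-(ω * (a * cos (θ t) + b * sin (θ t)))) t :=
  ⟨((hθ.cos.const_mul a).add (hθ.sin.const_mul b)).congr_deriv (by ring),
    ((hθ.sin.const_mul a).neg.add (hθ.cos.const_mul b)).congr_deriv (by ring)⟩

variable {ω x y : ℝ → ℝ}

theorem sq_add_sq_eq_of_hasDerivAt_rotating (hx : ∀ t, HasDerivAt x (ω t * y t) t)
    (hy : ∀ t, HasDerivAt y (-(ω t * x t)) t) (t : ℝ) :
    x t ^ 2 + y t ^ 2 = x 0 ^ 2 + y 0 ^ 2 :=
  congrFun (eq_of_forall_hasDerivAt (f' := 0)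
    (fun t => (((hx t).pow 2).add ((hy t).pow 2)).congr_deriv (by rw [Pi.zero_apply]; ring))
    (fun _ => hasDerivAt_const _ _) 0 rfl) t

theorem eq_of_hasDerivAt_rotating {u v : ℝ → ℝ} (hx : ∀ t, HasDerivAt x (ω t * y t) t)
    (hy : ∀ t, HasDerivAt y (-(ω t * x t)) t) (hu : ∀ t, HasDerivAt u (ω t * v t) t)
    (hv : ∀ t, HasDerivAt v (-(ω t * u t)) t) (hx₀ : x 0 = u 0) (hy₀ : y 0 = v 0) :
    x = u ∧ y = v := by
  have hdist := sq_add_sq_eq_of_hasDerivAt_rotating (x := x - u) (y := y - v) (ω := ω)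
    (fun t => ((hx t).sub (hu t)).congr_deriv (by rw [Pi.sub_apply]; ring))
    (fun t => ((hy t).sub (hv t)).congr_deriv (by rw [Pi.sub_apply]; ring))
  simp only [Pi.sub_apply, hx₀, hy₀, sub_self] at hdist
  constructor <;> funext t <;> nlinarith [hdist t, sq_nonneg (x t - u t), sq_nonneg (y t - v t)]

end Rotation

section Flow

variable {d n : ℕ} {ℓ : ℝ → ℝ} {α : ℝ} {i : Fin (d + 1)}

/-- The explicit solution through `p`, with the rotation angle as a parameter `θ`; in the theorem
`θ t = α ∫₀ᵗ ℓ(2x₁ + 2s - 1) ds`. -/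
noncomputable def vf19Flow (ℓ : ℝ → ℝ) (α : ℝ) (i : Fin (d + 1))
    (p : (Fin (d + 1) → ℝ) × (Fin (d + 1) → ℝ) × (Fin n → ℝ)) (θ : ℝ → ℝ) (t : ℝ) :
    (Fin (d + 1) → ℝ) × (Fin (d + 1) → ℝ) × (Fin n → ℝ) :=
  (fun j => if j = 0 then p.1 0 + t
      else if j = i then p.1 i * cos (θ t) + p.2.1 i * sin (θ t)
      else p.1 j,
    fun j => if j = 0 then
        p.2.1 0 - α / 2 * (ℓ (2 * p.1 0 + 2 * t - 1) - ℓ (2 * p.1 0 - 1))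
          * (p.1 i ^ 2 + p.2.1 i ^ 2)
      else if j = i then -(p.1 i * sin (θ t)) + p.2.1 i * cos (θ t)
      else p.2.1 j,
    p.2.2)

variable {p : (Fin (d + 1) → ℝ) × (Fin (d + 1) → ℝ) × (Fin n → ℝ)} {θ : ℝ → ℝ}

theorem vf19Flow_zero (hθ : θ 0 = 0) : vf19Flow ℓ α i p θ 0 = p := by
  refine Prod.ext (funext fun j => ?_) (Prod.ext (funext fun j => ?_) rfl) <;>
    by_cases hj₀ : j = 0 <;> by_cases hji : j = i <;> simp_all [vf19Flow]

theorem vf19Flow_sq_add_sq (hi : i ≠ 0) (t : ℝ) :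
    (vf19Flow ℓ α i p θ t).1 i ^ 2 + (vf19Flow ℓ α i p θ t).2.1 i ^ 2 =
      p.1 i ^ 2 + p.2.1 i ^ 2 := by
  simpa [vf19Flow, hi] using rotation_sq_add_sq (p.1 i) (p.2.1 i) (θ t)

theorem hasDerivAt_vf19Flow (hi : i ≠ 0) (hℓ : Differentiable ℝ ℓ)
    (hθ : ∀ t, HasDerivAt θ (α * ℓ (2 * p.1 0 + 2 * t - 1)) t) (t : ℝ) :
    HasDerivAt (vf19Flow ℓ α i p θ) (vf19 ℓ α i (vf19Flow ℓ α i p θ t)) t := by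
  have harg : 2 * (p.1 0 + t) - 1 = 2 * p.1 0 + 2 * t - 1 := by ring
  have hℓt : HasDerivAt (fun s => ℓ (2 * p.1 0 + 2 * s - 1))
      (deriv ℓ (2 * p.1 0 + 2 * t - 1) * 2) t :=
    (hℓ _).hasDerivAt.comp t ((((hasDerivAt_id t).const_mul 2).const_add _).sub_const 1
      |>.congr_deriv (by ring))
  obtain ⟨hx, hy⟩ := hasDerivAt_rotation (p.1 i) (p.2.1 i) (hθ t)
  refine hasDerivAt_prod_pi_iff.2 ⟨fun j => ?_, fun j => ?_, fun k => hasDerivAt_const t _⟩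
  · rcases eq_or_ne j 0 with rfl | hj₀
    · simpa [vf19Flow, vf19] using (hasDerivAt_id t).const_add (p.1 0)
    rcases eq_or_ne j i with rfl | hji
    · simpa [vf19Flow, vf19, hj₀, harg, mul_assoc] using hx
    · simpa [vf19Flow, vf19, hj₀, hji] using hasDerivAt_const t (p.1 j)
  · rcases eq_or_ne j 0 with rfl | hj₀
    · have hy₁ := (((hℓt.sub_const (ℓ (2 * p.1 0 - 1))).const_mul (α / 2)).mul_const
        (p.1 i ^ 2 + p.2.1 i ^ 2)).const_sub (p.2.1 0)
      simp only [vf19Flow, vf19, ↓reduceIte, if_neg hi, harg, rotation_sq_add_sq]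
      exact hy₁.congr_deriv (by ring)
    rcases eq_or_ne j i with rfl | hji
    · simpa [vf19Flow, vf19, hj₀, harg, mul_assoc] using hy
    · simpa [vf19Flow, vf19, hj₀, hji] using hasDerivAt_const t (p.2.1 j)


theorem vf19_solution_unique (hi : i ≠ 0)
    {δ γ : ℝ → (Fin (d + 1) → ℝ) × (Fin (d + 1) → ℝ) × (Fin n → ℝ)}
    (hδ : ∀ t, HasDerivAt δ (vf19 ℓ α i (δ t)) t) (hγ : ∀ t, HasDerivAt γ (vf19 ℓ α i (γ t)) t)
    (h₀ : δ 0 = γ 0) : δ = γ := by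
  simp only [hasDerivAt_prod_pi_iff, forall_and] at hδ hγ
  obtain ⟨hδx, hδy, hδz⟩ := hδ
  obtain ⟨hγx, hγy, hγz⟩ := hγ
  have hx₁ : (fun t => (δ t).1 0) = fun t => (γ t).1 0 :=
    eq_of_forall_hasDerivAt (fun t => by simpa [vf19] using hδx t 0)
      (fun t => by simpa [vf19] using hγx t 0) 0 (by rw [h₀])
  obtain ⟨hxi, hyi⟩ : ((fun t => (δ t).1 i) = fun t => (γ t).1 i) ∧
      (fun t => (δ t).2.1 i) = fun t => (γ t).2.1 i := by
    refine eq_of_hasDerivAt_rotating (ω := fun t => α * ℓ (2 * (δ t).1 0 - 1))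
      (fun t => by simpa [vf19, hi] using hδx t i) (fun t => by simpa [vf19, hi] using hδy t i)
      (fun t => ?_) (fun t => ?_) (by rw [h₀]) (by rw [h₀])
    · simpa [vf19, hi, congrFun hx₁ t] using hγx t i
    · simpa [vf19, hi, congrFun hx₁ t] using hγy t i
  have hy₁ : (fun t => (δ t).2.1 0) = fun t => (γ t).2.1 0 := by
    refine eq_of_forall_hasDerivAt (fun t => by simpa [vf19] using hδy t 0)
      (fun t => ?_) 0 (by rw [h₀])
    simpa [vf19, congrFun hx₁ t, congrFun hxi t, congrFun hyi t] using hγy t 0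
  have hxy : ∀ j, ((fun t => (δ t).1 j) = fun t => (γ t).1 j) ∧
      (fun t => (δ t).2.1 j) = fun t => (γ t).2.1 j := by
    intro j
    rcases eq_or_ne j 0 with rfl | hj₀
    · exact ⟨hx₁, hy₁⟩
    rcases eq_or_ne j i with rfl | hji
    · exact ⟨hxi, hyi⟩
    exact ⟨eq_of_forall_hasDerivAt (f' := 0) (fun t => by simpa [vf19, hj₀, hji] using hδx t j)
        (fun t => by simpa [vf19, hj₀, hji] using hγx t j) 0 (by rw [h₀]),
      eq_of_forall_hasDerivAt (f' := 0) (fun t => by simpa [vf19, hj₀, hji] using hδy t j)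
        (fun t => by simpa [vf19, hj₀, hji] using hγy t j) 0 (by rw [h₀])⟩
  have hz : ∀ k, (fun t => (δ t).2.2 k) = fun t => (γ t).2.2 k := fun k =>
    eq_of_forall_hasDerivAt (f' := 0) (fun t => by simpa [vf19] using hδz t k)
      (fun t => by simpa [vf19] using hγz t k) 0 (by rw [h₀])
  funext t
  exact Prod.ext (funext fun j => congrFun (hxy j).1 t)
    (Prod.ext (funext fun j => congrFun (hxy j).2 t) (funext fun k => congrFun (hz k) t))

end Flow

theorem stmt_19_general (d n : ℕ) (ℓ : ℝ → ℝ) (hℓ : ContDiff ℝ 1 ℓ) (α : ℝ)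
    (i : Fin (d + 1)) (hi : i ≠ 0)
    (p : (Fin (d + 1) → ℝ) × (Fin (d + 1) → ℝ) × (Fin n → ℝ))
    (θ : ℝ → ℝ)
    (hθ : θ = fun t => α * ∫ s in (0 : ℝ)..t, ℓ (2 * p.1 0 + 2 * s - 1))
    (γ : ℝ → (Fin (d + 1) → ℝ) × (Fin (d + 1) → ℝ) × (Fin n → ℝ))
    (hγ : γ = fun t =>
      (fun j => if j = 0 then p.1 0 + t
        else if j = i then p.1 i * Real.cos (θ t) + p.2.1 i * Real.sin (θ t)
        else p.1 j,
       fun j => if j = 0 then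
          p.2.1 0 - α / 2 * (ℓ (2 * p.1 0 + 2 * t - 1) - ℓ (2 * p.1 0 - 1))
            * (p.1 i ^ 2 + p.2.1 i ^ 2)
        else if j = i then -(p.1 i * Real.sin (θ t)) + p.2.1 i * Real.cos (θ t)
        else p.2.1 j,
       p.2.2)) :
    γ 0 = p ∧
    (∀ t, HasDerivAt γ (vf19 ℓ α i (γ t)) t) ∧
    (∀ t, (γ t).1 i ^ 2 + (γ t).2.1 i ^ 2 = p.1 i ^ 2 + p.2.1 i ^ 2) ∧
    (∀ δ : ℝ → (Fin (d + 1) → ℝ) × (Fin (d + 1) → ℝ) × (Fin n → ℝ),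
      δ 0 = p → (∀ t, HasDerivAt δ (vf19 ℓ α i (δ t)) t) → δ = γ) := by
  have hθ' : ∀ t, HasDerivAt θ (α * ℓ (2 * p.1 0 + 2 * t - 1)) t := fun t => by
    rw [hθ]
    exact ((hℓ.continuous.comp (by fun_prop)).integral_hasStrictDerivAt 0 t).hasDerivAt.const_mul α
  have hθ₀ : θ 0 = 0 := by simp [hθ]
  obtain rfl : γ = vf19Flow ℓ α i p θ := hγ
  have hsol := hasDerivAt_vf19Flow hi (hℓ.differentiable one_ne_zero) hθ'
  refine ⟨vf19Flow_zero hθ₀, hsol, vf19Flow_sq_add_sq hi, fun δ hδ₀ hδ => ?_⟩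
  exact vf19_solution_unique hi hδ hsol (hδ₀.trans (vf19Flow_zero hθ₀).symm)

/-- the explicit solution of the system `vf19`: `x₁(t) = x₁ + t`,
`(x_i(t), y_i(t)) = R_{-θ(t)}(x_i, y_i)` with `θ(t) = α ∫₀ᵗ ℓ(2x₁ + 2s - 1) ds`,
`y₁(t) = y₁ - (α/2)[ℓ(2x₁+2t-1) - ℓ(2x₁-1)](x_i² + y_i²)`, other coordinates constant;
in particular `x_i(t)² + y_i(t)²` is constant, and this solution is unique. -/
theorem stmt_19 (d n : ℕ) (hd : 1 ≤ d) (ℓ : ℝ → ℝ) (hℓ : ContDiff ℝ 1 ℓ) (α : ℝ)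
    (i : Fin (d + 1)) (hi : i ≠ 0)
    (p : (Fin (d + 1) → ℝ) × (Fin (d + 1) → ℝ) × (Fin n → ℝ))
    (θ : ℝ → ℝ)
    (hθ : θ = fun t => α * ∫ s in (0 : ℝ)..t, ℓ (2 * p.1 0 + 2 * s - 1))
    (γ : ℝ → (Fin (d + 1) → ℝ) × (Fin (d + 1) → ℝ) × (Fin n → ℝ))
    (hγ : γ = fun t =>
      (fun j => if j = 0 then p.1 0 + t
        else if j = i then p.1 i * Real.cos (θ t) + p.2.1 i * Real.sin (θ t)
        else p.1 j,
       fun j => if j = 0 then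
          p.2.1 0 - α / 2 * (ℓ (2 * p.1 0 + 2 * t - 1) - ℓ (2 * p.1 0 - 1))
            * (p.1 i ^ 2 + p.2.1 i ^ 2)
        else if j = i then -(p.1 i * Real.sin (θ t)) + p.2.1 i * Real.cos (θ t)
        else p.2.1 j,
       p.2.2)) :
    γ 0 = p ∧
    (∀ t, HasDerivAt γ (vf19 ℓ α i (γ t)) t) ∧
    (∀ t, (γ t).1 i ^ 2 + (γ t).2.1 i ^ 2 = p.1 i ^ 2 + p.2.1 i ^ 2) ∧
    (∀ δ : ℝ → (Fin (d + 1) → ℝ) × (Fin (d + 1) → ℝ) × (Fin n → ℝ),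
      δ 0 = p → (∀ t, HasDerivAt δ (vf19 ℓ α i (δ t)) t) → δ = γ) :=
  stmt_19_general d n ℓ hℓ α i hi p θ hθ γ hγ
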